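/- arXiv:1610.00682 — 2 statements merged into one kernel-verified Lean document; each statement's English description precedes it below -/
import Mathlib

section
/- Let A be a nonempty compact convex subset of a finite-dimensional real vector space V and let n ≥ 1. Then the canonical linear equivalence V ⊗ ℝⁿ ≃ Vⁿ (sending v ⊗ (c₁, …, c_n) to (c₁·v, …, c_n·v)) maps the minimal tensor product A ⊠ Δ_{n-1} bijectively onto the n-fold direct sum of A, namely the convex hull in Vⁿ of the union over i = 1, …, n of the sets {ι_i(a) : a ∈ A}, where ι_i(a) is the element of Vⁿ with a in the i-th coordinate and 0 in all other coordinates. -/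
open scoped TensorProduct

noncomputable section

/-- The minimal tensor product of two state spaces: the convex hull of products of states. -/
def minTensor {V W : Type*} [AddCommGroup V] [Module ℝ V] [AddCommGroup W] [Module ℝ W]
    (A : Set V) (B : Set W) : Set (V ⊗[ℝ] W) :=
  convexHull ℝ {x : V ⊗[ℝ] W | ∃ a ∈ A, ∃ b ∈ B, x = a ⊗ₜ[ℝ] b}

/-- The standard simplex `Δ_{n-1}` in `ℝⁿ`: the convex hull of the standard basis vectors. -/
def simplexSet (n : ℕ) : Set (Fin n → ℝ) :=
  convexHull ℝ {x : Fin n → ℝ | ∃ i : Fin n, x = Pi.single i 1}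

lemma simplexSet_eq_stdSimplex (n : ℕ) : simplexSet n = stdSimplex ℝ (Fin n) := by
  rw [← convexHull_basis_eq_stdSimplex, simplexSet]
  congr 1
  ext x
  simp only [Set.mem_setOf_eq, Set.mem_range]
  constructor
  · rintro ⟨i, rfl⟩
    exact ⟨i, by funext j; simp [Pi.single_apply, eq_comm]⟩
  · rintro ⟨i, rfl⟩
    exact ⟨i, by funext j; simp [Pi.single_apply, eq_comm]⟩

/-- The canonical equivalence `V ⊗ ℝⁿ ≃ Vⁿ` maps `A ⊠ Δ_{n-1}` onto the `n`-fold direct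
sum of `A`. -/
theorem minTensor_simplex_eq_direct_sum {V : Type*}
    [NormedAddCommGroup V] [NormedSpace ℝ V] [FiniteDimensional ℝ V]
    (A : Set V) (hA : A.Nonempty) (hAc : IsCompact A) (hAv : Convex ℝ A)
    (n : ℕ) (hn : 1 ≤ n)
    (φ : (V ⊗[ℝ] (Fin n → ℝ)) ≃ₗ[ℝ] (Fin n → V))
    (hφ : ∀ (v : V) (c : Fin n → ℝ), φ (v ⊗ₜ[ℝ] c) = fun i => c i • v) :
    ⇑φ '' minTensor A (simplexSet n) =
      convexHull ℝ (⋃ i : Fin n, {x : Fin n → V | ∃ a ∈ A, x = Pi.single i a}) := by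
  rw [minTensor, show ⇑φ = ⇑φ.toLinearMap from rfl, φ.toLinearMap.image_convexHull]
  refine Set.Subset.antisymm (convexHull_min ?_ (convex_convexHull ℝ _))
    (convexHull_min ?_ (convex_convexHull ℝ _))
  · rintro x ⟨y, ⟨a, ha, b, hb, rfl⟩, rfl⟩
    rw [simplexSet_eq_stdSimplex] at hb
    have hx : φ.toLinearMap (a ⊗ₜ[ℝ] b) = ∑ i : Fin n, b i • (Pi.single i a : Fin n → V) := by
      show φ (a ⊗ₜ[ℝ] b) = _
      rw [hφ]
      funext j
      simp [Finset.sum_apply, Pi.single_apply]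
    rw [hx]
    refine (convex_convexHull ℝ _).sum_mem (fun i _ => hb.1 i) hb.2 (fun i _ => ?_)
    exact subset_convexHull ℝ _ (Set.mem_iUnion.2 ⟨i, a, ha, rfl⟩)
  · rintro x hx
    obtain ⟨i, a, ha, rfl⟩ := Set.mem_iUnion.1 hx
    refine subset_convexHull ℝ _ ⟨a ⊗ₜ[ℝ] Pi.single i 1,
      ⟨a, ha, Pi.single i 1, subset_convexHull ℝ _ ⟨i, rfl⟩, rfl⟩, ?_⟩
    show φ (a ⊗ₜ[ℝ] Pi.single i 1) = _
    rw [hφ]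
    funext j
    simp [Pi.single_apply]
end
end

section
/- (Partial broadcasters allow for non-disturbing measurements.) Let A ⊆ V and B ⊆ W be normalized state spaces with unit effects u_A, u_B, and let G : V → V ⊗ W be a partial broadcaster (G(A) ⊆ A ⊠ B and (id_V ⊗ u_B)(G(a)) = a for all a ∈ A). Then for every linear functional e : W → ℝ and every extreme point s of A there exists a scalar c ∈ ℝ such that (id_V ⊗ e)(G(s)) = c · s; that is, the linear maps M_e := (id_V ⊗ e) ∘ G act proportionally to the identity on every pure state of A, so they constitute a non-disturbing measurement. -/
open scoped TensorProduct

noncomputable section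

/-- The marginal map `id_V ⊗ e : V ⊗ W → V`, determined by `v ⊗ w ↦ e(w) • v`. -/
def marginal {V W : Type*} [AddCommGroup V] [Module ℝ V] [AddCommGroup W] [Module ℝ W]
    (e : W →ₗ[ℝ] ℝ) : (V ⊗[ℝ] W) →ₗ[ℝ] V :=
  (TensorProduct.rid ℝ V).toLinearMap.comp (TensorProduct.map LinearMap.id e)

lemma marginal_tmul {V W : Type*} [AddCommGroup V] [Module ℝ V] [AddCommGroup W] [Module ℝ W]
    (e : W →ₗ[ℝ] ℝ) (v : V) (w : W) : marginal e (v ⊗ₜ[ℝ] w) = e w • v := by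
  simp [marginal]

lemma extreme_point_convex_comb {V : Type*} [AddCommGroup V] [Module ℝ V]
    {A : Set V} (hAv : Convex ℝ A) {s : V} (hs : s ∈ Set.extremePoints ℝ A)
    {ι : Type*} (t : Finset ι) (w : ι → ℝ) (z : ι → V)
    (hw0 : ∀ i ∈ t, 0 ≤ w i) (hw1 : ∑ i ∈ t, w i = 1)
    (hz : ∀ i ∈ t, z i ∈ A) (hsum : ∑ i ∈ t, w i • z i = s) :
    ∀ i ∈ t, 0 < w i → z i = s := by
  by_contra h
  push_neg at h
  obtain ⟨i₀, hi₀t, hwi₀, hzi₀⟩ := h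
  rw [hAv.mem_extremePoints_iff_mem_diff_convexHull_diff] at hs
  apply hs.2
  classical
  set T := t.filter (fun i => z i = s) with hT
  set t' := t.filter (fun i => ¬ z i = s) with ht'
  have hkey := Finset.sum_filter_add_sum_filter_not t (fun i => z i = s) (fun i => w i • z i)
  have hkeyw := Finset.sum_filter_add_sum_filter_not t (fun i => z i = s) w
  have hc : 0 < ∑ i ∈ t', w i := by
    apply Finset.sum_pos' (fun i hi => hw0 i (Finset.mem_filter.1 hi).1)
    exact ⟨i₀, Finset.mem_filter.2 ⟨hi₀t, hzi₀⟩, hwi₀⟩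
  have hTs : ∑ i ∈ T, w i • z i = (∑ i ∈ T, w i) • s := by
    rw [Finset.sum_smul]
    exact Finset.sum_congr rfl fun i hi => by rw [(Finset.mem_filter.1 hi).2]
  have hsplit : ∑ i ∈ t', w i • z i = (∑ i ∈ t', w i) • s := by
    have h1 : (∑ i ∈ T, w i) • s + ∑ i ∈ t', w i • z i = s := by
      rw [← hTs]; rw [hw1] at hkeyw; exact hkey.trans hsum
    have h2 : (∑ i ∈ T, w i) = 1 - ∑ i ∈ t', w i := by linarith [hkeyw, hw1]
    rw [h2] at h1
    rw [sub_smul, one_smul] at h1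
    calc ∑ i ∈ t', w i • z i
        = (s - (∑ i ∈ t', w i) • s + ∑ i ∈ t', w i • z i) - (s - (∑ i ∈ t', w i) • s) := by abel
      _ = s - (s - (∑ i ∈ t', w i) • s) := by rw [h1]
      _ = (∑ i ∈ t', w i) • s := by abel
  have hcm : t'.centerMass w z = s := by
    rw [Finset.centerMass, hsplit, smul_smul, inv_mul_cancel₀ hc.ne', one_smul]
  have hmem : t'.centerMass w z ∈ convexHull ℝ (A \ {s}) :=
    Finset.centerMass_mem_convexHull t' (fun i hi => hw0 i (Finset.mem_filter.1 hi).1) hc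
      (fun i hi => ⟨hz i (Finset.mem_filter.1 hi).1, (Finset.mem_filter.1 hi).2⟩)
  rwa [hcm] at hmem

/-- Partial broadcasters allow for the construction of non-disturbing measurements:
for any effect `e` on `W`, the map `M_e = (id ⊗ e) ∘ G` acts proportionally to the
identity on every pure state of `A`. -/
theorem partial_broadcaster_gives_nondisturbing_measurement {V W : Type*}
    [NormedAddCommGroup V] [NormedSpace ℝ V] [FiniteDimensional ℝ V]
    [NormedAddCommGroup W] [NormedSpace ℝ W] [FiniteDimensional ℝ W]
    (A : Set V) (hA : A.Nonempty) (hAc : IsCompact A) (hAv : Convex ℝ A)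
    (B : Set W) (hB : B.Nonempty) (hBc : IsCompact B) (hBv : Convex ℝ B)
    (uA : V →ₗ[ℝ] ℝ) (huA : ∀ a ∈ A, uA a = 1)
    (uB : W →ₗ[ℝ] ℝ) (huB : ∀ b ∈ B, uB b = 1)
    (G : V →ₗ[ℝ] (V ⊗[ℝ] W))
    (hG1 : ∀ a ∈ A, G a ∈ minTensor A B)
    (hG2 : ∀ a ∈ A, marginal uB (G a) = a) :
    ∀ e : W →ₗ[ℝ] ℝ, ∀ s ∈ Set.extremePoints ℝ A, ∃ c : ℝ,
      marginal e (G s) = c • s := by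
  intro e s hs
  have hsA : s ∈ A := hs.1
  have hmem := hG1 s hsA
  rw [minTensor, convexHull_eq] at hmem
  obtain ⟨ι, t, w, z, hw0, hw1, hz, hcm⟩ := hmem
  choose! a ha b hb heq using hz
  have hGs : G s = ∑ i ∈ t, w i • (a i ⊗ₜ[ℝ] b i) := by
    rw [← hcm, Finset.centerMass_eq_of_sum_1 _ _ hw1]
    exact Finset.sum_congr rfl fun i hi => by rw [heq i hi]
  have hmarg : ∀ f : W →ₗ[ℝ] ℝ, marginal f (G s) = ∑ i ∈ t, (w i * f (b i)) • a i := by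
    intro f
    rw [hGs, map_sum]
    exact Finset.sum_congr rfl fun i hi => by
      rw [map_smul, marginal_tmul, smul_smul]
  have hmargB : ∑ i ∈ t, w i • a i = s := by
    have := hG2 s hsA
    rw [hmarg uB] at this
    rw [← this]
    exact Finset.sum_congr rfl fun i hi => by rw [huB _ (hb i hi), mul_one]
  have hext := extreme_point_convex_comb hAv hs t w a hw0 hw1 (fun i hi => ha i hi) hmargB
  refine ⟨∑ i ∈ t, w i * e (b i), ?_⟩
  rw [hmarg e, Finset.sum_smul]
  refine Finset.sum_congr rfl fun i hi => ?_
  rcases lt_or_eq_of_le (hw0 i hi) with hpos | hzero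
  · rw [hext i hi hpos]
  · rw [← hzero, zero_mul, zero_smul, zero_smul]
end
end
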